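/- arXiv:2504.01674 — 2 statements merged into one kernel-verified Lean document; each statement's English description precedes it below -/
import Mathlib

section
/- Triviality of the kernel of the sub-critical scalar linearized operator (intermediate claim in the proof of Lemma 3.4): let N ≥ 2 and assume ∫_{ℝ²}(|∇w|² + w² − Q₀²w²) dx ≥ 0 for every real H¹ function w. If h is a twice continuously differentiable real function on ℝ² with h and ∇h square-integrable satisfying Δh − h + (2N−3)Q²h = 0 on ℝ², then h ≡ 0. -/
open MeasureTheory Filter

noncomputable section

/-- The plane `ℝ²`. -/
abbrev Plane : Type := EuclideanSpace ℝ (Fin 2)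

/-- The `i`-th standard coordinate direction in the plane. -/
def coordDir (i : Fin 2) : Plane := EuclideanSpace.single i (1 : ℝ)

/-- Squared (Euclidean) norm of the gradient of `f` at `x`:
`|∇f(x)|² = ∑ᵢ ‖∂ᵢ f(x)‖²`. -/
def gradNormSq {E : Type*} [NormedAddCommGroup E] [NormedSpace ℝ E]
    (f : Plane → E) (x : Plane) : ℝ :=
  ∑ i : Fin 2, ‖fderiv ℝ f x (coordDir i)‖ ^ 2

/-- `f` is of class `H¹`: continuously differentiable and `f`, `∇f` square integrable. -/
def IsH1 {E : Type*} [NormedAddCommGroup E] [NormedSpace ℝ E] (f : Plane → E) : Prop :=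
  ContDiff ℝ 1 f ∧ Integrable (fun x => ‖f x‖ ^ 2) ∧ Integrable (fun x => gradNormSq f x)

/-- The Laplacian of a real-valued function on the plane. -/
def lap (f : Plane → ℝ) (x : Plane) : ℝ :=
  ∑ i : Fin 2, fderiv ℝ (fun y => fderiv ℝ f y (coordDir i)) x (coordDir i)

/-- The ground state `Q = (2N-1)^{-1/2} Q₀` of the `N`-coupled system. -/
def groundQ (Q₀ : SchwartzMap Plane ℝ) (N : ℕ) (x : Plane) : ℝ :=
  (Real.sqrt (2 * (N : ℝ) - 1))⁻¹ * Q₀ x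

/-- `e^{it}` as a complex number. -/
def mexp (t : ℝ) : ℂ := Complex.exp (Complex.I * (t : ℂ))

/-!
Testing the equation against `h` gives `∫ |∇h|² + h² = κ ∫ Q₀² h²` with
`κ = (2N-3)/(2N-1) < 1`, whereas the nonnegativity of the quadratic form at `w = h` gives
`∫ |∇h|² + h² ≥ ∫ Q₀² h²`. Hence `∫ Q₀² h² = 0`, and `h = 0` since `Q₀ > 0`.

With only `h, ∇h ∈ L²` there is no decay at infinity to kill the boundary term; it is handled by
the whole-space divergence theorem `∫ div F = 0` for `F, div F ∈ L¹`, proved by pairing `div F`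
with rescaled cutoffs `χₙ = χ(·/(n+1))`, whose gradients stay bounded and vanish eventually.
-/

open Topology

section Divergence

variable {E : Type*} [NormedAddCommGroup E] [NormedSpace ℝ E] [FiniteDimensional ℝ E]

theorem exists_cutoff_seq :
    ∃ χ : ℕ → E → ℝ, (∀ n, ContDiff ℝ 1 (χ n)) ∧ (∀ n, HasCompactSupport (χ n)) ∧
      (∀ n x, |χ n x| ≤ 1) ∧ (∃ C, ∀ n x, ‖fderiv ℝ (χ n) x‖ ≤ C) ∧
      ∀ x, ∀ᶠ n in atTop, χ n =ᶠ[𝓝 x] fun _ => 1 := by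
  let φ : ContDiffBump (0 : E) := ⟨1, 2, one_pos, one_lt_two⟩
  obtain ⟨C, hC⟩ := ((φ.contDiff (n := 1)).continuous_fderiv one_ne_zero
    ).bounded_above_of_compact_support (φ.hasCompactSupport.fderiv (𝕜 := ℝ))
  have hC₀ : 0 ≤ C := (norm_nonneg _).trans (hC 0)
  set c : ℕ → ℝ := fun n => ((n : ℝ) + 1)⁻¹
  have hc_pos : ∀ n, 0 < c n := fun n => by positivity
  have hc_le : ∀ n, c n ≤ 1 := fun n => inv_le_one_of_one_le₀ (by simp)
  refine ⟨fun n x => φ (c n • x), fun n => φ.contDiff.comp (contDiff_const_smul _),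
    fun n => φ.hasCompactSupport.comp_homeomorph (Homeomorph.smulOfNeZero _ (hc_pos n).ne'),
    fun n x => abs_le.2 ⟨by linarith [φ.nonneg (x := c n • x)], φ.le_one⟩,
    ⟨C, fun n x => ?_⟩, fun x => ?_⟩
  · rw [fderiv_comp_smul (f := φ), norm_smul, Real.norm_of_nonneg (hc_pos n).le]
    nlinarith [hC (c n • x), hc_le n, hc_pos n, norm_nonneg (fderiv ℝ φ (c n • x))]
  · filter_upwards [eventually_ge_atTop ⌈‖x‖⌉₊] with n hn
    have hx : ‖x‖ < n + 1 := by linarith [Nat.le_ceil ‖x‖, (Nat.cast_le (α := ℝ)).2 hn]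
    filter_upwards [Metric.isOpen_ball.mem_nhds (mem_ball_zero_iff.2 hx)] with y hy
    refine φ.one_of_mem_closedBall ?_
    rw [Metric.mem_closedBall, dist_zero_right, norm_smul, Real.norm_of_nonneg (hc_pos n).le]
    exact (inv_mul_le_one₀ (by positivity)).2 (mem_ball_zero_iff.1 hy).le

variable [MeasurableSpace E] [BorelSpace E] {μ : Measure E} [μ.IsAddHaarMeasure]

theorem integral_sum_fderiv_eq_zero {ι : Type*} [Fintype ι] {F : ι → E → ℝ} {v : ι → E}
    (hF : ∀ i, ContDiff ℝ 1 (F i)) (hF_int : ∀ i, Integrable (F i) μ)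
    (hdiv_int : Integrable (fun x => ∑ i, fderiv ℝ (F i) x (v i)) μ) :
    ∫ x, ∑ i, fderiv ℝ (F i) x (v i) ∂μ = 0 := by
  obtain ⟨χ, hχ, hχ_supp, hχ_le, ⟨C, hC⟩, hχ_one⟩ := exists_cutoff_seq (E := E)
  have hdχ : ∀ n, Continuous (fderiv ℝ (χ n)) := fun n => (hχ n).continuous_fderiv one_ne_zero
  have hdF : ∀ i, Continuous (fderiv ℝ (F i)) := fun i => (hF i).continuous_fderiv one_ne_zero
  have hparts : ∀ n, ∫ x, χ n x * ∑ i, fderiv ℝ (F i) x (v i) ∂μ =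
      -∑ i, ∫ x, fderiv ℝ (χ n) x (v i) * F i x ∂μ := by
    intro n
    have hint : ∀ i, Integrable (fun x => χ n x * fderiv ℝ (F i) x (v i)) μ := fun i =>
      ((hχ n).continuous.mul ((hdF i).clm_apply continuous_const)).integrable_of_hasCompactSupport
        (hχ_supp n).mul_right
    simp_rw [Finset.mul_sum]
    rw [integral_finsetSum _ fun i _ => hint i, ← Finset.sum_neg_distrib]
    refine Finset.sum_congr rfl fun i _ => integral_mul_fderiv_eq_neg_fderiv_mul_of_integrable
      ?_ (hint i) ?_ (fun x _ => (hχ n).differentiable one_ne_zero x)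
      (fun x _ => (hF i).differentiable one_ne_zero x)
    · exact (((hdχ n).clm_apply continuous_const).mul (hF i).continuous
        ).integrable_of_hasCompactSupport ((hχ_supp n).fderiv_apply (𝕜 := ℝ) _).mul_right
    · exact ((hχ n).continuous.mul (hF i).continuous).integrable_of_hasCompactSupport
        (hχ_supp n).mul_right
  have hlim_div : Tendsto (fun n => ∫ x, χ n x * ∑ i, fderiv ℝ (F i) x (v i) ∂μ) atTop
      (𝓝 (∫ x, ∑ i, fderiv ℝ (F i) x (v i) ∂μ)) := by
    refine tendsto_integral_of_dominated_convergence _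
      (fun n => ((hχ n).continuous.aestronglyMeasurable.mul hdiv_int.aestronglyMeasurable))
      hdiv_int.norm (fun n => .of_forall fun x => ?_) (.of_forall fun x => ?_)
    · rw [norm_mul]
      exact mul_le_of_le_one_left (norm_nonneg _) (hχ_le n x)
    · refine tendsto_const_nhds.congr' ?_
      filter_upwards [hχ_one x] with n hn
      rw [hn.eq_of_nhds, one_mul]
  have hlim_flux : Tendsto (fun n => ∑ i, ∫ x, fderiv ℝ (χ n) x (v i) * F i x ∂μ) atTop (𝓝 0) := by
    rw [← Finset.sum_const_zero]
    refine tendsto_finsetSum _ fun i _ => ?_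
    rw [← integral_zero E ℝ]
    refine tendsto_integral_of_dominated_convergence (fun x => C * ‖v i‖ * ‖F i x‖)
      (fun n => (((hdχ n).clm_apply continuous_const).aestronglyMeasurable.mul
        (hF_int i).aestronglyMeasurable))
      ((hF_int i).norm.const_mul _) (fun n => .of_forall fun x => ?_) (.of_forall fun x => ?_)
    · rw [norm_mul]
      gcongr
      exact ((fderiv ℝ (χ n) x).le_opNorm _).trans (by gcongr; exact hC n x)
    · refine tendsto_const_nhds.congr' ?_
      filter_upwards [hχ_one x] with n hn
      rw [hn.fderiv_eq, fderiv_const_apply, zero_apply, zero_mul]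
  simp_rw [hparts] at hlim_div
  exact tendsto_nhds_unique hlim_div (by simpa using hlim_flux.neg)

end Divergence

theorem sum_fderiv_mul_fderiv_coordDir {h : Plane → ℝ} (hh : ContDiff ℝ 2 h) (x : Plane) :
    ∑ i, fderiv ℝ (fun y => h y * fderiv ℝ h y (coordDir i)) x (coordDir i) =
      gradNormSq h x + h x * lap h x := by
  have hterm : ∀ i, fderiv ℝ (fun y => h y * fderiv ℝ h y (coordDir i)) x (coordDir i) =
      fderiv ℝ h x (coordDir i) ^ 2 +
        h x * fderiv ℝ (fun y => fderiv ℝ h y (coordDir i)) x (coordDir i) := by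
    intro i
    have hpartial : DifferentiableAt ℝ (fun y => fderiv ℝ h y (coordDir i)) x :=
      ((hh.fderiv_right (m := 1) le_rfl).clm_apply contDiff_const).differentiable one_ne_zero x
    rw [fderiv_fun_mul (hh.differentiable two_ne_zero x) hpartial]
    simp only [add_apply, smul_apply, smul_eq_mul]
    ring
  simp only [hterm, Finset.sum_add_distrib, gradNormSq, lap, Finset.mul_sum, Real.norm_eq_abs,
    sq_abs]

theorem integrable_mul_fderiv_coordDir {h : Plane → ℝ} (hh : ContDiff ℝ 1 h)
    (hi : Integrable (fun x => h x ^ 2)) (hgi : Integrable (gradNormSq h)) (i : Fin 2) :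
    Integrable (fun x => h x * fderiv ℝ h x (coordDir i)) := by
  refine (hi.add hgi).mono' (hh.continuous.mul ((hh.continuous_fderiv one_ne_zero).clm_apply
    continuous_const)).aestronglyMeasurable (.of_forall fun x => ?_)
  have hpartial_le : fderiv ℝ h x (coordDir i) ^ 2 ≤ gradNormSq h x := by
    have := Finset.single_le_sum (f := fun j => ‖fderiv ℝ h x (coordDir j)‖ ^ 2)
      (fun j _ => by positivity) (Finset.mem_univ i)
    simpa only [gradNormSq, Real.norm_eq_abs, sq_abs] using this
  rw [Pi.add_apply, Real.norm_eq_abs, abs_mul]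
  nlinarith [sq_nonneg (|h x| - |fderiv ℝ h x (coordDir i)|), sq_abs (h x),
    sq_abs (fderiv ℝ h x (coordDir i))]

theorem integral_gradNormSq_add_mul_lap_eq_zero {h : Plane → ℝ} (hh : ContDiff ℝ 2 h)
    (hi : Integrable (fun x => h x ^ 2)) (hgi : Integrable (gradNormSq h))
    (hlapi : Integrable (fun x => h x * lap h x)) :
    ∫ x, (gradNormSq h x + h x * lap h x) = 0 := by
  have hdiv_int : Integrable (fun x => gradNormSq h x + h x * lap h x) := hgi.add hlapi
  simp_rw [← sum_fderiv_mul_fderiv_coordDir hh] at hdiv_int ⊢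
  refine integral_sum_fderiv_eq_zero (fun i => ?_)
    (integrable_mul_fderiv_coordDir (hh.of_le one_le_two) hi hgi) hdiv_int
  exact (hh.of_le one_le_two).mul ((hh.fderiv_right (m := 1) le_rfl).clm_apply contDiff_const)

theorem SchwartzMap.integrable_sq_mul {E : Type*} [NormedAddCommGroup E] [NormedSpace ℝ E]
    [MeasurableSpace E] [OpensMeasurableSpace E] {μ : Measure E} (q : SchwartzMap E ℝ)
    {f : E → ℝ} (hf : Integrable f μ) :
    Integrable (fun x => q x ^ 2 * f x) μ :=
  hf.bdd_mul (q.continuous.pow 2).aestronglyMeasurable (.of_forall fun x => by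
    rw [norm_pow]; exact pow_le_pow_left₀ (norm_nonneg _) (q.norm_le_seminorm ℝ x) 2)

theorem eq_zero_of_integral_sq_mul_sq_eq_zero {X : Type*} [TopologicalSpace X]
    [MeasurableSpace X] {μ : Measure X} [μ.IsOpenPosMeasure] {q f : X → ℝ}
    (hq : ∀ x, q x ≠ 0) (hq_cont : Continuous q) (hf_cont : Continuous f)
    (hint : Integrable (fun x => q x ^ 2 * f x ^ 2) μ) (hzero : ∫ x, q x ^ 2 * f x ^ 2 ∂μ = 0)
    (x : X) : f x = 0 := by
  by_contra hx
  have := integral_pos_of_integrable_nonneg_nonzero ((hq_cont.pow 2).mul (hf_cont.pow 2)) hint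
    (fun x => mul_nonneg (sq_nonneg _) (sq_nonneg _)) (x := x)
    (mul_ne_zero (pow_ne_zero 2 (hq x)) (pow_ne_zero 2 hx))
  exact this.ne' hzero

theorem groundQ_sq (Q₀ : SchwartzMap Plane ℝ) {N : ℕ} (hN : 1 ≤ N) (x : Plane) :
    groundQ Q₀ N x ^ 2 = Q₀ x ^ 2 / (2 * N - 1) := by
  have : (0 : ℝ) ≤ 2 * N - 1 := by linarith [(Nat.one_le_cast (α := ℝ)).2 hN]
  rw [groundQ, mul_pow, inv_pow, Real.sq_sqrt this, inv_mul_eq_div]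

theorem subcritical_kernel_trivial_general
    (Q₀ : SchwartzMap Plane ℝ)
    (hQpos : ∀ x, 0 < Q₀ x)
    (N : ℕ) (hN : 2 ≤ N)
    (hLminus : ∀ w : Plane → ℝ, IsH1 w →
      0 ≤ ∫ x, (gradNormSq w x + w x ^ 2 - Q₀ x ^ 2 * w x ^ 2))
    (h : Plane → ℝ) (hc2 : ContDiff ℝ 2 h)
    (hi : Integrable (fun x => h x ^ 2))
    (hgi : Integrable (fun x => gradNormSq h x))
    (heq : ∀ x, lap h x - h x + (2 * (N : ℝ) - 3) * groundQ Q₀ N x ^ 2 * h x = 0) :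
    ∀ x, h x = 0 := by
  set κ : ℝ := (2 * N - 3) / (2 * N - 1)
  have hκ : κ < 1 := by
    have : (2 : ℝ) ≤ N := by exact_mod_cast hN
    rw [div_lt_one (by linarith)]
    linarith
  have hlap : ∀ x, h x * lap h x = h x ^ 2 - κ * (Q₀ x ^ 2 * h x ^ 2) := fun x => by
    rw [show lap h x = h x - (2 * N - 3) * groundQ Q₀ N x ^ 2 * h x by linarith [heq x],
      groundQ_sq Q₀ (by omega)]
    ring
  have hQh_int := Q₀.integrable_sq_mul hi
  have hrest_int : Integrable fun x => h x ^ 2 - κ * (Q₀ x ^ 2 * h x ^ 2) :=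
    hi.sub (hQh_int.const_mul κ)
  have hvirial := integral_gradNormSq_add_mul_lap_eq_zero hc2 hi hgi (by simpa only [hlap])
  simp_rw [hlap] at hvirial
  rw [integral_add hgi hrest_int, integral_sub hi (hQh_int.const_mul κ),
    integral_const_mul] at hvirial
  have hcoercive :=
    hLminus h ⟨hc2.of_le one_le_two, by simpa only [Real.norm_eq_abs, sq_abs], hgi⟩
  have henergy_int : Integrable fun x => gradNormSq h x + h x ^ 2 := hgi.add hi
  rw [integral_sub henergy_int hQh_int, integral_add hgi hi] at hcoercive
  have hQh_nonneg : 0 ≤ ∫ x, Q₀ x ^ 2 * h x ^ 2 := integral_nonneg fun x => by positivity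
  exact eq_zero_of_integral_sq_mul_sq_eq_zero (fun x => (hQpos x).ne') Q₀.continuous
    hc2.continuous hQh_int (by nlinarith)

/-- Triviality of the kernel of the sub-critical scalar linearized
operator (intermediate claim in the proof of Lemma 3.4). -/
theorem subcritical_kernel_trivial
    (Q₀ : SchwartzMap Plane ℝ)
    (hQpos : ∀ x, 0 < Q₀ x)
    (hQrad : ∀ x y : Plane, ‖x‖ = ‖y‖ → Q₀ x = Q₀ y)
    (hQeq : ∀ x, lap (⇑Q₀) x - Q₀ x + Q₀ x ^ 3 = 0)
    (N : ℕ) (hN : 2 ≤ N)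
    (hLminus : ∀ w : Plane → ℝ, IsH1 w →
      0 ≤ ∫ x, (gradNormSq w x + w x ^ 2 - Q₀ x ^ 2 * w x ^ 2))
    (h : Plane → ℝ) (hc2 : ContDiff ℝ 2 h)
    (hi : Integrable (fun x => h x ^ 2))
    (hgi : Integrable (fun x => gradNormSq h x))
    (heq : ∀ x, lap h x - h x + (2 * (N : ℝ) - 3) * groundQ Q₀ N x ^ 2 * h x = 0) :
    ∀ x, h x = 0 :=
  subcritical_kernel_trivial_general Q₀ hQpos N hN hLminus h hc2 hi hgi heq
end
end

section
/- Localized two-dimensional bilinear estimate (the estimate preceding (5.43) in the proof of Theorem 5.1): let χ : ℝ² → [0,1] be a smooth radially symmetric function with χ = 1 on {|x| ≤ 1} and χ = 0 on {|x| ≥ 2}. There exists a constant C > 0, depending only on χ, such that for every ρ > 0 and all H¹ functions g, h : ℝ² → ℂ, ∫_{ℝ²} χ(x/ρ)² |g(x)|² |h(x)|² dx ≤ C·( ‖χ(·/ρ)∇g‖²_{L²}‖h‖²_{L²} + ‖χ(·/ρ)∇h‖²_{L²}‖g‖²_{L²} + ρ^{−2}‖g‖²_{L²}‖h‖²_{L²}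 ). -/
open MeasureTheory Filter

noncomputable section

/-! The function `u = χ(·/ρ) g h` is `C¹` with compact support, so the Gagliardo–Nirenberg–Sobolev
inequality in the plane gives `‖u‖²_{L²} ≲ ‖∇u‖²_{L¹}`. By the product rule
`|∇u| ≤ χ(·/ρ) |∇g| |h| + χ(·/ρ) |g| |∇h| + ρ⁻¹ ‖∇χ‖_∞ |g| |h|`, and Cauchy–Schwarz bounds the `L¹`
norm of each term by the square root of the corresponding product on the right-hand side. -/

open scoped ENNReal

theorem ENNReal.add_add_sq_le (a b c : ℝ≥0∞) : (a + b + c) ^ 2 ≤ 3 * (a ^ 2 + b ^ 2 + c ^ 2) := by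
  rcases eq_or_ne a ⊤ with rfl | ha
  · simp
  rcases eq_or_ne b ⊤ with rfl | hb
  · simp
  rcases eq_or_ne c ⊤ with rfl | hc
  · simp
  lift a to NNReal using ha
  lift b to NNReal using hb
  lift c to NNReal using hc
  norm_cast
  rw [← NNReal.coe_le_coe]
  push_cast
  nlinarith [sq_nonneg ((a : ℝ) - b), sq_nonneg ((b : ℝ) - c), sq_nonneg ((a : ℝ) - c)]

section Lintegral

variable {α : Type*} [MeasurableSpace α] {μ : Measure α}

theorem sq_lintegral_mul_le {f k : α → ℝ≥0∞} (hf : AEMeasurable f μ) (hk : AEMeasurable k μ) :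
    (∫⁻ x, f x * k x ∂μ) ^ 2 ≤ (∫⁻ x, f x ^ 2 ∂μ) * ∫⁻ x, k x ^ 2 ∂μ := by
  have h := ENNReal.lintegral_mul_le_Lp_mul_Lq μ Real.HolderConjugate.two_two hf hk
  simp only [Pi.mul_apply, ENNReal.rpow_two] at h
  calc (∫⁻ x, f x * k x ∂μ) ^ 2
      ≤ ((∫⁻ x, f x ^ 2 ∂μ) ^ (1 / 2 : ℝ) * (∫⁻ x, k x ^ 2 ∂μ) ^ (1 / 2 : ℝ)) ^ 2 := by gcongr
    _ = (∫⁻ x, f x ^ 2 ∂μ) * ∫⁻ x, k x ^ 2 ∂μ := by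
      rw [mul_pow, ← ENNReal.rpow_natCast, ← ENNReal.rpow_natCast, ← ENNReal.rpow_mul,
        ← ENNReal.rpow_mul]
      norm_num

theorem lintegral_enorm_sq_eq_ofReal_integral {E : Type*} [NormedAddCommGroup E] {f : α → E}
    (hf : Integrable (fun x => ‖f x‖ ^ 2) μ) :
    ∫⁻ x, ‖f x‖ₑ ^ 2 ∂μ = ENNReal.ofReal (∫ x, ‖f x‖ ^ 2 ∂μ) := by
  rw [ofReal_integral_eq_lintegral_ofReal hf (ae_of_all _ fun x => by positivity)]
  simp only [ENNReal.ofReal_pow (norm_nonneg _), ofReal_norm]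

end Lintegral

theorem enorm_fderiv_smul_mul_le {E 𝕜 : Type*} [NormedAddCommGroup E] [NormedSpace ℝ E]
    [NormedField 𝕜] [NormedAlgebra ℝ 𝕜] {φ : E → ℝ} {g h : E → 𝕜} {x : E}
    (hφ : DifferentiableAt ℝ φ x) (hg : DifferentiableAt ℝ g x) (hh : DifferentiableAt ℝ h x) :
    ‖fderiv ℝ (fun y => φ y • (g y * h y)) x‖ₑ ≤
      ‖φ x‖ₑ * ‖fderiv ℝ g x‖ₑ * ‖h x‖ₑ + ‖φ x‖ₑ * ‖fderiv ℝ h x‖ₑ * ‖g x‖ₑ +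
        ‖fderiv ℝ φ x‖ₑ * (‖g x‖ₑ * ‖h x‖ₑ) := by
  have hd : HasFDerivAt (fun y => φ y • (g y * h y))
      (φ x • (g x • fderiv ℝ h x + h x • fderiv ℝ g x) + (fderiv ℝ φ x).smulRight (g x * h x)) x :=
    hφ.hasFDerivAt.smul (hg.hasFDerivAt.mul hh.hasFDerivAt)
  rw [hd.fderiv]
  refine (enorm_add_le (E := E →L[ℝ] 𝕜) _ _).trans ?_
  gcongr
  · calc _ ≤ ‖φ x‖ₑ * (‖fderiv ℝ g x‖ₑ * ‖h x‖ₑ + ‖fderiv ℝ h x‖ₑ * ‖g x‖ₑ) := by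
          rw [enorm_smul]
          gcongr
          refine (enorm_add_le (E := E →L[ℝ] 𝕜) _ _).trans ?_
          rw [enorm_smul, enorm_smul, add_comm, mul_comm ‖h x‖ₑ, mul_comm ‖g x‖ₑ]
      _ = _ := by ring
  · simp only [enorm_eq_nnnorm, ContinuousLinearMap.nnnorm_smulRight_apply, nnnorm_mul,
      ENNReal.coe_mul, le_refl]

theorem gradNormSq_nonneg {E : Type*} [NormedAddCommGroup E] [NormedSpace ℝ E]
    (f : Plane → E) (x : Plane) : 0 ≤ gradNormSq f x :=
  Finset.sum_nonneg fun _ _ => sq_nonneg _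

theorem integral_sq_mul_gradNormSq_nonneg {E : Type*} [NormedAddCommGroup E] [NormedSpace ℝ E]
    (w : Plane → ℝ) (f : Plane → E) : 0 ≤ ∫ x, w x ^ 2 * gradNormSq f x :=
  integral_nonneg fun x => mul_nonneg (sq_nonneg _) (gradNormSq_nonneg f x)

theorem norm_fderiv_le_sqrt_gradNormSq {E : Type*} [NormedAddCommGroup E] [NormedSpace ℝ E]
    (f : Plane → E) (x : Plane) : ‖fderiv ℝ f x‖ ≤ √(gradNormSq f x) := by
  refine (fderiv ℝ f x).opNorm_le_bound (Real.sqrt_nonneg _) fun v => ?_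
  have hv : v = ∑ i, v i • coordDir i := by
    simpa [coordDir, ← EuclideanSpace.basisFun_apply] using
      ((EuclideanSpace.basisFun (Fin 2) ℝ).sum_repr v).symm
  calc ‖fderiv ℝ f x v‖ = ‖∑ i, v i • fderiv ℝ f x (coordDir i)‖ := by
        conv_lhs => rw [hv]
        simp
    _ ≤ ∑ i, ‖v i‖ * ‖fderiv ℝ f x (coordDir i)‖ :=
        (norm_sum_le _ _).trans_eq (by simp only [norm_smul])
    _ ≤ √(∑ i, ‖v i‖ ^ 2) * √(gradNormSq f x) := Real.sum_mul_le_sqrt_mul_sqrt _ _ _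
    _ = √(gradNormSq f x) * ‖v‖ := by rw [mul_comm, EuclideanSpace.norm_eq]

theorem norm_fderiv_sq_le_gradNormSq {E : Type*} [NormedAddCommGroup E] [NormedSpace ℝ E]
    (f : Plane → E) (x : Plane) : ‖fderiv ℝ f x‖ ^ 2 ≤ gradNormSq f x := by
  calc ‖fderiv ℝ f x‖ ^ 2 ≤ √(gradNormSq f x) ^ 2 := by
        gcongr
        exact norm_fderiv_le_sqrt_gradNormSq f x
    _ = gradNormSq f x := Real.sq_sqrt (gradNormSq_nonneg f x)

theorem IsH1.lintegral_enorm_mul_enorm_fderiv_sq_le {E : Type*} [NormedAddCommGroup E]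
    [NormedSpace ℝ E] {f : Plane → E} (hf : IsH1 f) {w : Plane → ℝ} (hw : Continuous w)
    (hwc : HasCompactSupport w) :
    ∫⁻ x, (‖w x‖ₑ * ‖fderiv ℝ f x‖ₑ) ^ 2 ≤ ENNReal.ofReal (∫ x, w x ^ 2 * gradNormSq f x) := by
  obtain ⟨M, hM⟩ := hw.bounded_above_of_compact_support hwc
  have hint : Integrable (fun x => w x ^ 2 * gradNormSq f x) :=
    hf.2.2.bdd_mul (c := M ^ 2) (hw.pow 2).aestronglyMeasurable
      (ae_of_all _ fun x => by rw [norm_pow]; gcongr; exact hM x)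
  rw [ofReal_integral_eq_lintegral_ofReal hint
    (ae_of_all _ fun x => mul_nonneg (sq_nonneg _) (gradNormSq_nonneg f x))]
  refine lintegral_mono fun x => ?_
  rw [mul_pow, ← ofReal_norm, ← ofReal_norm, ← ENNReal.ofReal_pow (norm_nonneg _),
    ← ENNReal.ofReal_pow (norm_nonneg _), ← ENNReal.ofReal_mul (sq_nonneg _), Real.norm_eq_abs,
    sq_abs]
  gcongr
  exact norm_fderiv_sq_le_gradNormSq f x

theorem IsH1.sq_lintegral_enorm_mul_enorm_fderiv_mul_enorm_le {E F : Type*} [NormedAddCommGroup E]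
    [NormedSpace ℝ E] [NormedAddCommGroup F] {f₁ : Plane → E} (hf₁ : IsH1 f₁) {f₂ : Plane → F}
    (hf₂c : Continuous f₂) (hf₂ : Integrable fun x => ‖f₂ x‖ ^ 2) {w : Plane → ℝ}
    (hw : Continuous w) (hwc : HasCompactSupport w) :
    (∫⁻ x, ‖w x‖ₑ * ‖fderiv ℝ f₁ x‖ₑ * ‖f₂ x‖ₑ) ^ 2 ≤
      ENNReal.ofReal (∫ x, w x ^ 2 * gradNormSq f₁ x) * ENNReal.ofReal (∫ x, ‖f₂ x‖ ^ 2) := by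
  have hmeas : Measurable fun x => ‖w x‖ₑ * ‖fderiv ℝ f₁ x‖ₑ :=
    hw.measurable.enorm.mul (hf₁.1.continuous_fderiv one_ne_zero).measurable.enorm
  calc _ ≤ (∫⁻ x, (‖w x‖ₑ * ‖fderiv ℝ f₁ x‖ₑ) ^ 2) * ∫⁻ x, ‖f₂ x‖ₑ ^ 2 :=
        sq_lintegral_mul_le hmeas.aemeasurable hf₂c.enorm.measurable.aemeasurable
    _ ≤ _ := by
        rw [lintegral_enorm_sq_eq_ofReal_integral hf₂]
        gcongr
        exact hf₁.lintegral_enorm_mul_enorm_fderiv_sq_le hw hwc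

theorem sq_lintegral_enorm_fderiv_smul_mul_le {𝕜 : Type*} [NormedField 𝕜] [NormedAlgebra ℝ 𝕜]
    {φ : Plane → ℝ} (hφ : ContDiff ℝ 1 φ) (hφc : HasCompactSupport φ) {L : ℝ}
    (hL : ∀ x, ‖fderiv ℝ φ x‖ ≤ L) {g h : Plane → 𝕜} (hg : IsH1 g) (hh : IsH1 h) :
    (∫⁻ x, ‖fderiv ℝ (fun y => φ y • (g y * h y)) x‖ₑ) ^ 2 ≤
      3 * (ENNReal.ofReal (∫ x, φ x ^ 2 * gradNormSq g x) * ENNReal.ofReal (∫ x, ‖h x‖ ^ 2)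
        + ENNReal.ofReal (∫ x, φ x ^ 2 * gradNormSq h x) * ENNReal.ofReal (∫ x, ‖g x‖ ^ 2)
        + ENNReal.ofReal L ^ 2 *
          (ENNReal.ofReal (∫ x, ‖g x‖ ^ 2) * ENNReal.ofReal (∫ x, ‖h x‖ ^ 2))) := by
  have hg' : Measurable fun x => ‖g x‖ₑ := hg.1.continuous.enorm.measurable
  have hh' : Measurable fun x => ‖h x‖ₑ := hh.1.continuous.enorm.measurable
  have hA : (∫⁻ x, ‖fderiv ℝ φ x‖ₑ * (‖g x‖ₑ * ‖h x‖ₑ)) ^ 2 ≤ ENNReal.ofReal L ^ 2 *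
      (ENNReal.ofReal (∫ x, ‖g x‖ ^ 2) * ENNReal.ofReal (∫ x, ‖h x‖ ^ 2)) := by
    have hgh := sq_lintegral_mul_le (μ := volume) hg'.aemeasurable hh'.aemeasurable
    rw [lintegral_enorm_sq_eq_ofReal_integral hg.2.1,
      lintegral_enorm_sq_eq_ofReal_integral hh.2.1] at hgh
    calc _ ≤ (∫⁻ x, ENNReal.ofReal L * (‖g x‖ₑ * ‖h x‖ₑ)) ^ 2 := by
          gcongr with x
          rw [← ofReal_norm]
          exact ENNReal.ofReal_le_ofReal (hL x)
      _ ≤ _ := by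
          rw [lintegral_const_mul' _ _ ENNReal.ofReal_ne_top, mul_pow]
          gcongr
  have hsplit : ∫⁻ x, ‖fderiv ℝ (fun y => φ y • (g y * h y)) x‖ₑ ≤
      (∫⁻ x, ‖φ x‖ₑ * ‖fderiv ℝ g x‖ₑ * ‖h x‖ₑ) + (∫⁻ x, ‖φ x‖ₑ * ‖fderiv ℝ h x‖ₑ * ‖g x‖ₑ)
        + ∫⁻ x, ‖fderiv ℝ φ x‖ₑ * (‖g x‖ₑ * ‖h x‖ₑ) := by
    have hφ' : Measurable fun x => ‖φ x‖ₑ := hφ.continuous.enorm.measurable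
    have hdφ : Measurable fun x => ‖fderiv ℝ φ x‖ₑ :=
      (hφ.continuous_fderiv one_ne_zero).enorm.measurable
    have hdh : Measurable fun x => ‖fderiv ℝ h x‖ₑ :=
      (hh.1.continuous_fderiv one_ne_zero).enorm.measurable
    calc _ ≤ ∫⁻ x, (‖φ x‖ₑ * ‖fderiv ℝ g x‖ₑ * ‖h x‖ₑ + ‖φ x‖ₑ * ‖fderiv ℝ h x‖ₑ * ‖g x‖ₑ
            + ‖fderiv ℝ φ x‖ₑ * (‖g x‖ₑ * ‖h x‖ₑ)) := by
          exact lintegral_mono fun x => enorm_fderiv_smul_mul_le (hφ.differentiable one_ne_zero x)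
            (hg.1.differentiable one_ne_zero x) (hh.1.differentiable one_ne_zero x)
      _ = _ := by
          rw [lintegral_add_right' _ (by fun_prop), lintegral_add_right' _ (by fun_prop)]
  calc _ ≤ (_ + _ + _) ^ 2 := by gcongr
    _ ≤ _ := (ENNReal.add_add_sq_le _ _ _).trans (by
        gcongr
        · exact hg.sq_lintegral_enorm_mul_enorm_fderiv_mul_enorm_le hh.1.continuous hh.2.1
            hφ.continuous hφc
        · exact hh.sq_lintegral_enorm_mul_enorm_fderiv_mul_enorm_le hg.1.continuous hg.2.1
            hφ.continuous hφc)

theorem integral_sq_mul_norm_sq_mul_norm_sq_le {𝕜 : Type*} [NormedField 𝕜] [NormedAlgebra ℝ 𝕜]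
    {φ : Plane → ℝ} (hφ : ContDiff ℝ 1 φ) (hφc : HasCompactSupport φ) {L : ℝ}
    (hL : ∀ x, ‖fderiv ℝ φ x‖ ≤ L) {g h : Plane → 𝕜} (hg : IsH1 g) (hh : IsH1 h) :
    ∫ x, φ x ^ 2 * ‖g x‖ ^ 2 * ‖h x‖ ^ 2 ≤
      3 * lintegralPowLePowLIntegralFDerivConst (volume : Measure Plane) 2 *
        ((∫ x, φ x ^ 2 * gradNormSq g x) * (∫ x, ‖h x‖ ^ 2)
          + (∫ x, φ x ^ 2 * gradNormSq h x) * (∫ x, ‖g x‖ ^ 2)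
          + L ^ 2 * (∫ x, ‖g x‖ ^ 2) * (∫ x, ‖h x‖ ^ 2)) := by
  have hL0 : 0 ≤ L := (norm_nonneg _).trans (hL 0)
  have hIg := integral_sq_mul_gradNormSq_nonneg φ g
  have hIh := integral_sq_mul_gradNormSq_nonneg φ h
  have hu : ContDiff ℝ 1 fun x => φ x • (g x * h x) := hφ.smul (hg.1.mul hh.1)
  have huc : HasCompactSupport fun x => φ x • (g x * h x) := hφc.smul_right
  have hp : Real.HolderConjugate (Module.finrank ℝ Plane) 2 := by
    rw [finrank_euclideanSpace_fin]
    exact_mod_cast Real.HolderConjugate.two_two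
  have hu2 : Integrable fun x => ‖φ x • (g x * h x)‖ ^ 2 := by
    have h1 : HasCompactSupport fun x => ‖φ x • (g x * h x)‖ ^ 2 :=
      huc.norm.comp_left (g := fun t : ℝ => t ^ 2) (by norm_num)
    have h2 : Continuous fun x => ‖φ x • (g x * h x)‖ ^ 2 := by
      have := hu.continuous
      fun_prop
    exact h2.integrable_of_hasCompactSupport h1
  rw [← ENNReal.ofReal_le_ofReal_iff (by positivity)]
  calc ENNReal.ofReal (∫ x, φ x ^ 2 * ‖g x‖ ^ 2 * ‖h x‖ ^ 2)
      = ∫⁻ x, ‖φ x • (g x * h x)‖ₑ ^ 2 := by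
        rw [lintegral_enorm_sq_eq_ofReal_integral hu2]
        congr 2 with x
        simp only [norm_smul, norm_mul, Real.norm_eq_abs, mul_pow, sq_abs, mul_assoc]
    _ ≤ lintegralPowLePowLIntegralFDerivConst volume 2 *
          (∫⁻ x, ‖fderiv ℝ (fun y => φ y • (g y * h y)) x‖ₑ) ^ 2 := by
        simpa only [ENNReal.rpow_two] using lintegral_pow_le_pow_lintegral_fderiv volume hu huc hp
    _ ≤ _ := by
        grw [sq_lintegral_enorm_fderiv_smul_mul_le hφ hφc hL hg hh]
        rw [ENNReal.ofReal_mul (by positivity), ENNReal.ofReal_mul (by positivity),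
          ENNReal.ofReal_add (by positivity) (by positivity),
          ENNReal.ofReal_add (by positivity) (by positivity), ENNReal.ofReal_mul hIg,
          ENNReal.ofReal_mul hIh, ENNReal.ofReal_mul (by positivity),
          ENNReal.ofReal_mul (by positivity), ENNReal.ofReal_pow hL0, ENNReal.ofReal_ofNat, ENNReal.ofReal_coe_nnreal]
        apply le_of_eq
        ring

theorem localized_bilinear_estimate_general
    (χ : Plane → ℝ) (hχsmooth : ContDiff ℝ (⊤ : ℕ∞) χ)
    (hχzero : ∀ x : Plane, 2 ≤ ‖x‖ → χ x = 0) :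
    ∃ C > 0, ∀ ρ : ℝ, 0 < ρ → ∀ g h : Plane → ℂ, IsH1 g → IsH1 h →
      (∫ x, χ (ρ⁻¹ • x) ^ 2 * ‖g x‖ ^ 2 * ‖h x‖ ^ 2)
        ≤ C * ((∫ x, χ (ρ⁻¹ • x) ^ 2 * gradNormSq g x) * (∫ x, ‖h x‖ ^ 2)
            + (∫ x, χ (ρ⁻¹ • x) ^ 2 * gradNormSq h x) * (∫ x, ‖g x‖ ^ 2)
            + ρ⁻¹ ^ 2 * (∫ x, ‖g x‖ ^ 2) * (∫ x, ‖h x‖ ^ 2)) := by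
  have hχ : ContDiff ℝ 1 χ := hχsmooth.of_le (by exact_mod_cast le_top)
  have hχc : HasCompactSupport χ := HasCompactSupport.intro (isCompact_closedBall 0 2)
    fun x hx => hχzero x (by
      rw [Metric.mem_closedBall, dist_zero_right, not_le] at hx
      exact hx.le)
  obtain ⟨K, hK⟩ := (hχ.continuous_fderiv one_ne_zero).bounded_above_of_compact_support
    (hχc.fderiv ℝ)
  refine ⟨3 * lintegralPowLePowLIntegralFDerivConst (volume : Measure Plane) 2 * (K ^ 2 + 1) + 1,
    by positivity, fun ρ hρ g h hg hh => ?_⟩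
  have hφ (x : Plane) : ‖fderiv ℝ (fun y => χ (ρ⁻¹ • y)) x‖ ≤ ρ⁻¹ * K := by
    rw [fderiv_comp_smul, norm_smul, Real.norm_of_nonneg (by positivity)]
    gcongr
    exact hK _
  have hχρ : ContDiff ℝ 1 fun y : Plane => χ (ρ⁻¹ • y) := hχ.comp (contDiff_const_smul _)
  have hχρc : HasCompactSupport fun y : Plane => χ (ρ⁻¹ • y) := hχc.comp_smul (inv_ne_zero hρ.ne')
  refine (integral_sq_mul_norm_sq_mul_norm_sq_le hχρ hχρc hφ hg hh).trans ?_
  have hIg := integral_sq_mul_gradNormSq_nonneg (fun x => χ (ρ⁻¹ • x)) g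
  have hIh := integral_sq_mul_gradNormSq_nonneg (fun x => χ (ρ⁻¹ • x)) h
  have hgrad : 0 ≤ (∫ x, χ (ρ⁻¹ • x) ^ 2 * gradNormSq g x) * (∫ x, ‖h x‖ ^ 2)
      + (∫ x, χ (ρ⁻¹ • x) ^ 2 * gradNormSq h x) * (∫ x, ‖g x‖ ^ 2) :=
    add_nonneg (mul_nonneg hIg (by positivity)) (mul_nonneg hIh (by positivity))
  have hL2 : 0 ≤ ρ⁻¹ ^ 2 * (∫ x, ‖g x‖ ^ 2) * ∫ x, ‖h x‖ ^ 2 := by positivity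
  set C₀ : ℝ := 3 * lintegralPowLePowLIntegralFDerivConst (volume : Measure Plane) 2
  have hC₀ : 0 ≤ C₀ := by positivity
  nlinarith [mul_nonneg hC₀ hL2, mul_nonneg (mul_nonneg hC₀ (sq_nonneg K)) hgrad]

/-- Localized two-dimensional bilinear estimate (the estimate preceding
(5.43) in the proof of Theorem 5.1). -/
theorem localized_bilinear_estimate
    (χ : Plane → ℝ) (hχsmooth : ContDiff ℝ (⊤ : ℕ∞) χ)
    (hχrange : ∀ x, χ x ∈ Set.Icc (0 : ℝ) 1)
    (hχrad : ∀ x y : Plane, ‖x‖ = ‖y‖ → χ x = χ y)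
    (hχone : ∀ x : Plane, ‖x‖ ≤ 1 → χ x = 1)
    (hχzero : ∀ x : Plane, 2 ≤ ‖x‖ → χ x = 0) :
    ∃ C > 0, ∀ ρ : ℝ, 0 < ρ → ∀ g h : Plane → ℂ, IsH1 g → IsH1 h →
      (∫ x, χ (ρ⁻¹ • x) ^ 2 * ‖g x‖ ^ 2 * ‖h x‖ ^ 2)
        ≤ C * ((∫ x, χ (ρ⁻¹ • x) ^ 2 * gradNormSq g x) * (∫ x, ‖h x‖ ^ 2)
            + (∫ x, χ (ρ⁻¹ • x) ^ 2 * gradNormSq h x) * (∫ x, ‖g x‖ ^ 2)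
            + ρ⁻¹ ^ 2 * (∫ x, ‖g x‖ ^ 2) * (∫ x, ‖h x‖ ^ 2)) :=
  localized_bilinear_estimate_general χ hχsmooth hχzero
end
end
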